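/- Let m ≥ 2 and n ≥ 2 be integers. Then E_S(C^3_{m,n}) < E_S(C^3_{m,n+1}); that is, the sum of the absolute values of the eigenvalues of S(m,n) is strictly less than the sum of the absolute values of the eigenvalues of S(m,n+1). In particular, for fixed m the Seidel energy of C^3_{m,n} is strictly increasing in n. -/

import Mathlib

open Polynomial Matrix

/-- The Seidel matrix of the complete 3-uniform bipartite hypergraph `C³_{m,n}`. -/
noncomputable def seidelS (m n : ℕ) : Matrix (Fin m ⊕ Fin n) (Fin m ⊕ Fin n) ℝ :=
  fun i j =>
    if i = j then 0
    else
      match i, j with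
      | Sum.inl _, Sum.inl _ => 1 - 2 * (n : ℝ)
      | Sum.inr _, Sum.inr _ => 1 - 2 * (m : ℝ)
      | _, _ => 1 - 2 * ((m : ℝ) + (n : ℝ) - 2)

/-- Type-I hyperedge-deleted Seidel matrix. -/
noncomputable def seidelI (m n : ℕ) : Matrix (Fin m ⊕ Fin n) (Fin m ⊕ Fin n) ℝ :=
  fun i j =>
    match i, j with
    | Sum.inl a, Sum.inr b =>
        if a.val = 0 ∧ b.val ≤ 1 then 1 - 2 * ((m : ℝ) + (n : ℝ) - 3)
        else seidelS m n (Sum.inl a) (Sum.inr b)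
    | Sum.inr b, Sum.inl a =>
        if a.val = 0 ∧ b.val ≤ 1 then 1 - 2 * ((m : ℝ) + (n : ℝ) - 3)
        else seidelS m n (Sum.inr b) (Sum.inl a)
    | Sum.inr a, Sum.inr b =>
        if (a.val = 0 ∧ b.val = 1) ∨ (a.val = 1 ∧ b.val = 0) then 1 - 2 * ((m : ℝ) - 1)
        else seidelS m n (Sum.inr a) (Sum.inr b)
    | Sum.inl a, Sum.inl b => seidelS m n (Sum.inl a) (Sum.inl b)

/-- Type-II hyperedge-deleted Seidel matrix. -/
noncomputable def seidelII (m n : ℕ) : Matrix (Fin m ⊕ Fin n) (Fin m ⊕ Fin n) ℝ :=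
  fun i j =>
    match i, j with
    | Sum.inl a, Sum.inl b =>
        if (a.val = 0 ∧ b.val = 1) ∨ (a.val = 1 ∧ b.val = 0) then 1 - 2 * ((n : ℝ) - 1)
        else seidelS m n (Sum.inl a) (Sum.inl b)
    | Sum.inl a, Sum.inr b =>
        if a.val ≤ 1 ∧ b.val = 0 then 1 - 2 * ((m : ℝ) + (n : ℝ) - 3)
        else seidelS m n (Sum.inl a) (Sum.inr b)
    | Sum.inr b, Sum.inl a =>
        if a.val ≤ 1 ∧ b.val = 0 then 1 - 2 * ((m : ℝ) + (n : ℝ) - 3)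
        else seidelS m n (Sum.inr b) (Sum.inl a)
    | Sum.inr a, Sum.inr b => seidelS m n (Sum.inr a) (Sum.inr b)

/-- Seidel energy: sum of absolute values of the eigenvalues (roots of the
characteristic polynomial, with multiplicity). -/
noncomputable def seidelEnergy {k : Type*} [Fintype k] [DecidableEq k]
    (M : Matrix k k ℝ) : ℝ :=
  (M.charpoly.roots.map (fun x => |x|)).sum

/-!
`S(m,n)` is constant on each of its four blocks apart from the diagonal. For such a matrix the
matrix determinant lemma reduces `det (x - S)` to the determinant of the `2 × 2` quotient matrix,
so the spectrum of `S(m,n)` is `2n - 1` with multiplicity `m - 1`, `2m - 1` with multiplicity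
`n - 1`, and the two eigenvalues of the quotient matrix. The quotient matrix has nonpositive
determinant, so its eigenvalues have opposite signs and contribute `√(tr² - 4 det)` to the energy:
`E(m,n) = (m-1)(2n-1) + (n-1)(2m-1) + √((n-m)² + 4mn(2m+2n-5)²)`, which is increasing in `n`.
-/

open Finset

section BlockQuotient

variable {ι κ R : Type*} [DecidableEq κ]

lemma submatrix_eq_mul_mul_transpose [Fintype κ] [Semiring R] (p : ι → κ) (W : Matrix κ κ R) :
    W.submatrix p p =
      (1 : Matrix κ κ R).submatrix p id * W * ((1 : Matrix κ κ R).submatrix p id)ᵀ := by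
  ext i j
  simp [mul_apply, one_apply]

lemma transpose_mul_diagonal_mul [Fintype ι] [DecidableEq ι] [Semiring R] (p : ι → κ) (f : ι → R) :
    ((1 : Matrix κ κ R).submatrix p id)ᵀ * diagonal f * (1 : Matrix κ κ R).submatrix p id =
      diagonal fun k => ∑ i with p i = k, f i := by
  ext k l
  simp only [mul_apply, diagonal_apply, transpose_apply, submatrix_apply, one_apply, id,
    sum_filter, mul_ite, ite_mul, mul_one, mul_zero, zero_mul, sum_ite_eq', mem_univ, if_true]
  split_ifs with hkl
  · subst hkl
    exact sum_congr rfl fun i _ => by grind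
  · exact sum_eq_zero fun i _ => by grind

lemma det_diagonal_comp_sub_submatrix_mul_prod [Fintype ι] [DecidableEq ι] [Fintype κ] [Field R]
    (p : ι → κ) (W : Matrix κ κ R) {d : κ → R} (hd : ∀ k, d k ≠ 0) :
    det (diagonal (d ∘ p) - W.submatrix p p) * ∏ k, d k =
      det (diagonal d - W * diagonal (fun k => (#{i | p i = k} : R))) * ∏ i, d (p i) := by
  set U := (1 : Matrix κ κ R).submatrix p id
  set c : κ → R := fun k => #{i | p i = k}
  have hUU : Uᵀ * diagonal (fun i => (d (p i))⁻¹) * U = diagonal (c / d) := by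
    rw [transpose_mul_diagonal_mul]
    congr 1 with k
    rw [sum_congr rfl fun i hi => by rw [(mem_filter.1 hi).2], sum_const, nsmul_eq_mul,
      Pi.div_apply, div_eq_mul_inv]
  have hlhs : diagonal (d ∘ p) - W.submatrix p p =
      diagonal (d ∘ p) * (1 - diagonal (fun i => (d (p i))⁻¹) * U * W * Uᵀ) := by
    have hinv : diagonal (d ∘ p) * diagonal (fun i => (d (p i))⁻¹) = 1 := by
      rw [diagonal_mul_diagonal, ← diagonal_one]
      exact congrArg diagonal (funext fun i => mul_inv_cancel₀ (hd (p i)))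
    rw [submatrix_eq_mul_mul_transpose, Matrix.mul_sub, Matrix.mul_one, ← Matrix.mul_assoc,
      ← Matrix.mul_assoc, ← Matrix.mul_assoc, hinv, Matrix.one_mul]
  have hrhs : diagonal d - W * diagonal c = (1 - W * diagonal (c / d)) * diagonal d := by
    rw [Matrix.sub_mul, Matrix.one_mul, Matrix.mul_assoc, diagonal_mul_diagonal]
    congr 3 with k
    rw [Pi.div_apply, div_mul_cancel₀ _ (hd k)]
  rw [hlhs, hrhs, det_mul, det_mul, det_one_sub_mul_comm (_ * U * W), ← Matrix.mul_assoc,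
    ← Matrix.mul_assoc, hUU, det_one_sub_mul_comm W, det_diagonal, det_diagonal]
  simp only [Function.comp_apply]
  ring

/-- The quotient matrix of `W.submatrix p p + diagonal (e ∘ p)` for the partition of `ι` into the
fibres of `p`: its `(k, l)` entry is the sum, over the columns of block `l`, of any row of block `k`. -/
def blockQuotient [Fintype ι] [Fintype κ] [Semiring R] (p : ι → κ) (W : Matrix κ κ R)
    (e : κ → R) : Matrix κ κ R :=
  W * diagonal (fun k => (#{i | p i = k} : R)) + diagonal e

theorem charpoly_submatrix_add_diagonal_mul_prod [Fintype ι] [DecidableEq ι] [Fintype κ] [Field R]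
    [Infinite R] (p : ι → κ) (W : Matrix κ κ R) (e : κ → R) :
    (W.submatrix p p + diagonal (e ∘ p)).charpoly * ∏ k, (X - C (e k)) =
      (blockQuotient p W e).charpoly * ∏ i, (X - C (e (p i))) := by
  refine eq_of_infinite_eval_eq _ _ ((Set.finite_range e).infinite_compl.mono fun x hx => ?_)
  have hd : ∀ k, x - e k ≠ 0 := fun k h => hx ⟨k, (sub_eq_zero.1 h).symm⟩
  simp only [Set.mem_ofPred_eq, eval_mul, eval_prod, eval_sub, eval_X, eval_C, eval_charpoly]
  convert det_diagonal_comp_sub_submatrix_mul_prod p W hd using 3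
  · rw [scalar_apply, sub_add_eq_sub_sub_swap, diagonal_sub]
    rfl
  · rw [blockQuotient, scalar_apply, sub_add_eq_sub_sub_swap, diagonal_sub]

end BlockQuotient

lemma seidelEnergy_eq_sum_abs {k : Type*} [Fintype k] [DecidableEq k] {M : Matrix k k ℝ}
    {s : Multiset ℝ} (h : M.charpoly = (s.map fun a => X - C a).prod) :
    seidelEnergy M = (s.map abs).sum := by
  rw [seidelEnergy, h, roots_multiset_prod_X_sub_C]

lemma X_sq_sub_C_mul_X_add_C_eq_mul {t d : ℝ} (h : 4 * d ≤ t ^ 2) :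
    X ^ 2 - C t * X + C d =
      (X - C ((t + √(t ^ 2 - 4 * d)) / 2)) * (X - C ((t - √(t ^ 2 - 4 * d)) / 2)) := by
  have hsq := Real.sq_sqrt (sub_nonneg.2 h)
  have hsum : C t = C ((t + √(t ^ 2 - 4 * d)) / 2) + C ((t - √(t ^ 2 - 4 * d)) / 2) := by
    rw [← C_add]
    congr 1
    ring
  have hprod : C d = C ((t + √(t ^ 2 - 4 * d)) / 2) * C ((t - √(t ^ 2 - 4 * d)) / 2) := by
    rw [← C_mul]
    congr 1
    linear_combination (1 / 4 : ℝ) * hsq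
  rw [hsum, hprod]
  ring

lemma abs_add_abs_quadratic_roots {t d : ℝ} (hd : d ≤ 0) :
    |(t + √(t ^ 2 - 4 * d)) / 2| + |(t - √(t ^ 2 - 4 * d)) / 2| = √(t ^ 2 - 4 * d) := by
  have habs : |t| ≤ √(t ^ 2 - 4 * d) := by
    rw [← Real.sqrt_sq_eq_abs]
    exact Real.sqrt_le_sqrt (by linarith)
  rw [abs_of_nonneg (by linarith [neg_abs_le t]), abs_of_nonpos (by linarith [le_abs_self t])]
  ring

section Seidel

variable (m n : ℕ)

def seidelBlock : Fin m ⊕ Fin n → Fin 2 := Sum.elim (fun _ => 0) (fun _ => 1)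

def seidelWeights : Matrix (Fin 2) (Fin 2) ℝ :=
  !![1 - 2 * (n : ℝ), 1 - 2 * ((m : ℝ) + n - 2); 1 - 2 * ((m : ℝ) + n - 2), 1 - 2 * (m : ℝ)]

lemma seidelS_eq_submatrix_add_diagonal :
    seidelS m n = (seidelWeights m n).submatrix (seidelBlock m n) (seidelBlock m n) +
      diagonal (![2 * (n : ℝ) - 1, 2 * (m : ℝ) - 1] ∘ seidelBlock m n) := by
  ext i j
  rcases eq_or_ne i j with rfl | hij
  · rcases i with i | i <;> simp [seidelS, seidelWeights, seidelBlock]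
  · rcases i with i | i <;> rcases j with j | j <;>
      simp [seidelS, seidelWeights, seidelBlock, hij]

lemma card_fiber_seidelBlock : (fun k => (#{i | seidelBlock m n i = k} : ℝ)) = ![(m : ℝ), n] := by
  ext k
  fin_cases k <;> simp only [card_filter, Fintype.sum_sum_type] <;> simp [seidelBlock]

lemma blockQuotient_seidel :
    blockQuotient (seidelBlock m n) (seidelWeights m n) ![2 * (n : ℝ) - 1, 2 * (m : ℝ) - 1] =
      !![((m : ℝ) - 1) * (1 - 2 * n), n * (1 - 2 * ((m : ℝ) + n - 2));
        m * (1 - 2 * ((m : ℝ) + n - 2)), ((n : ℝ) - 1) * (1 - 2 * m)] := by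
  rw [blockQuotient, card_fiber_seidelBlock]
  ext k l
  fin_cases k <;> fin_cases l <;> simp [seidelWeights, vecMul_diagonal] <;> ring

end Seidel

lemma charpoly_seidelS {m n : ℕ} (hm : m ≠ 0) (hn : n ≠ 0) :
    (seidelS m n).charpoly =
      (X - C (2 * (n : ℝ) - 1)) ^ (m - 1) * (X - C (2 * (m : ℝ) - 1)) ^ (n - 1) *
        (X ^ 2 - C (((m : ℝ) - 1) * (1 - 2 * n) + ((n : ℝ) - 1) * (1 - 2 * m)) * X +
          C (((m : ℝ) - 1) * (1 - 2 * n) * (((n : ℝ) - 1) * (1 - 2 * m)) -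
            n * (1 - 2 * ((m : ℝ) + n - 2)) * (m * (1 - 2 * ((m : ℝ) + n - 2))))) := by
  have key := charpoly_submatrix_add_diagonal_mul_prod (seidelBlock m n) (seidelWeights m n)
    ![2 * (n : ℝ) - 1, 2 * (m : ℝ) - 1]
  rw [← seidelS_eq_submatrix_add_diagonal, blockQuotient_seidel, charpoly_fin_two,
    trace_fin_two_of, det_fin_two_of, Fin.prod_univ_two, Fintype.prod_sum_type] at key
  simp only [seidelBlock, Sum.elim_inl, Sum.elim_inr, prod_const, card_univ,
    Fintype.card_fin, Matrix.cons_val_zero, Matrix.cons_val_one, Matrix.cons_val_fin_one] at key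
  have hne : (X - C (2 * (n : ℝ) - 1)) * (X - C (2 * (m : ℝ) - 1)) ≠ 0 :=
    ((monic_X_sub_C _).mul (monic_X_sub_C _)).ne_zero
  refine mul_right_cancel₀ hne ?_
  rw [key, ← pow_sub_one_mul hm, ← pow_sub_one_mul hn]
  ring

lemma det_blockQuotient_seidel_nonpos {m n : ℕ} (hm : 2 ≤ m) (hn : 2 ≤ n) :
    ((m : ℝ) - 1) * (1 - 2 * n) * (((n : ℝ) - 1) * (1 - 2 * m)) -
      n * (1 - 2 * ((m : ℝ) + n - 2)) * (m * (1 - 2 * ((m : ℝ) + n - 2))) ≤ 0 := by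
  have hm' : (2 : ℝ) ≤ m := by exact_mod_cast hm
  have hn' : (2 : ℝ) ≤ n := by exact_mod_cast hn
  have hrow : ((m : ℝ) - 1) * (2 * m - 1) ≤ m * (2 * m + 2 * n - 5) := by nlinarith
  have hcol : ((n : ℝ) - 1) * (2 * n - 1) ≤ n * (2 * m + 2 * n - 5) := by nlinarith
  nlinarith [mul_le_mul hrow hcol (by nlinarith) (by nlinarith)]

lemma seidelEnergy_seidelS {m n : ℕ} (hm : 2 ≤ m) (hn : 2 ≤ n) :
    seidelEnergy (seidelS m n) =
      ((m : ℝ) - 1) * (2 * n - 1) + ((n : ℝ) - 1) * (2 * m - 1) +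
        √(((n : ℝ) - m) ^ 2 + 4 * m * n * (2 * (m : ℝ) + 2 * n - 5) ^ 2) := by
  have hm' : (2 : ℝ) ≤ m := by exact_mod_cast hm
  have hn' : (2 : ℝ) ≤ n := by exact_mod_cast hn
  have hcharpoly := charpoly_seidelS (m := m) (n := n) (by omega) (by omega)
  set t : ℝ := ((m : ℝ) - 1) * (1 - 2 * n) + ((n : ℝ) - 1) * (1 - 2 * m)
  set d : ℝ := ((m : ℝ) - 1) * (1 - 2 * n) * (((n : ℝ) - 1) * (1 - 2 * m)) -
      n * (1 - 2 * ((m : ℝ) + n - 2)) * (m * (1 - 2 * ((m : ℝ) + n - 2)))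
  have hd : d ≤ 0 := det_blockQuotient_seidel_nonpos hm hn
  have hdisc : t ^ 2 - 4 * d = ((n : ℝ) - m) ^ 2 + 4 * m * n * (2 * (m : ℝ) + 2 * n - 5) ^ 2 := by
    ring
  rw [X_sq_sub_C_mul_X_add_C_eq_mul (by nlinarith)] at hcharpoly
  rw [seidelEnergy_eq_sum_abs (s := Multiset.replicate (m - 1) (2 * (n : ℝ) - 1) +
      Multiset.replicate (n - 1) (2 * (m : ℝ) - 1) +
      {(t + √(t ^ 2 - 4 * d)) / 2, (t - √(t ^ 2 - 4 * d)) / 2})]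
  · simp only [Multiset.map_add, Multiset.sum_add, Multiset.map_replicate, Multiset.sum_replicate,
      Multiset.insert_eq_cons, Multiset.map_cons, Multiset.sum_cons, Multiset.map_singleton,
      Multiset.sum_singleton, nsmul_eq_mul, abs_of_nonneg (by linarith : (0 : ℝ) ≤ 2 * n - 1),
      abs_of_nonneg (by linarith : (0 : ℝ) ≤ 2 * m - 1)]
    rw [abs_add_abs_quadratic_roots hd, hdisc, Nat.cast_sub (by omega), Nat.cast_sub (by omega)]
    ring
  · rw [hcharpoly]
    simp only [Multiset.map_add, Multiset.prod_add, Multiset.map_replicate,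
      Multiset.prod_replicate, Multiset.insert_eq_cons, Multiset.map_cons, Multiset.prod_cons,
      Multiset.map_singleton, Multiset.prod_singleton]

theorem stmt16 (m n : ℕ) (hm : 2 ≤ m) (hn : 2 ≤ n) :
    seidelEnergy (seidelS m n) < seidelEnergy (seidelS m (n + 1)) := by
  rw [seidelEnergy_seidelS hm hn, seidelEnergy_seidelS hm (by omega)]
  have hm' : (2 : ℝ) ≤ m := by exact_mod_cast hm
  have hn' : (2 : ℝ) ≤ n := by exact_mod_cast hn
  push_cast
  have hdisc : ((n : ℝ) - m) ^ 2 + 4 * m * n * (2 * (m : ℝ) + 2 * n - 5) ^ 2 ≤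
      ((n : ℝ) + 1 - m) ^ 2 + 4 * m * (n + 1) * (2 * (m : ℝ) + 2 * (n + 1) - 5) ^ 2 := by
    nlinarith [mul_pos (by linarith : (0 : ℝ) < m) (by linarith : (0 : ℝ) < n)]
  linarith [Real.sqrt_le_sqrt hdisc]
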